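/- arXiv:2601.21952 — 5 statements merged into one kernel-verified Lean document; each statement's English description precedes it below -/
import Mathlib

section
/- Let n ≥ 2 be an integer and define ρ : ℝⁿ × (−∞, 0) → ℝ by ρ(x, t) = (4π(−t))^{−(n−1)/2} · exp(−‖x‖²/(4(−t))). Then for every t < 0, every x ∈ ℝⁿ, and every unit vector ν ∈ ℝⁿ, one has Δρ(x,t) − (Hess ρ)(x,t)(ν, ν) + (∇ρ(x,t)·ν)²/ρ(x,t) + ∂ρ/∂t(x,t) = 0, where Δ and Hess denote the Laplacian and Hessian in the spatial variable x. (Equivalently, the sum of (Hess ρ)(eᵢ, eᵢ) over an orthonormal basis of the hyperplane ν^⊥, plus (∇ρ·ν)²/ρ, plus ρ_t, vanishes identically.) -/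
open Real Filter

/-- The backwards heat kernel on ℝⁿ with the scaling appropriate to ℝ^{n-1}. -/
noncomputable def backwardsHeatKernel (n : ℕ) (x : EuclideanSpace ℝ (Fin n)) (t : ℝ) : ℝ :=
  (4 * π * (-t)) ^ (-(((n : ℝ) - 1) / 2)) * Real.exp (-‖x‖ ^ 2 / (4 * (-t)))

/-! With `a = 1/(4t)` the spatial slice of `ρ` is `C · exp (a‖x‖²)`, so `∇ρ = 2aρ x` and
`Hess ρ = 2aρ (2a x ⊗ x + I)`. Hence `Δρ − Hess ρ(ν,ν) = 2aρ (2a (‖x‖² − ⟪x,ν⟫²) + n − 1)` and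
`(∇ρ·ν)²/ρ = 4a²ρ ⟪x,ν⟫²`, while `ρ_t = ρ ((n−1)/(2(−t)) − ‖x‖²/(4t²))`. As `2a = 1/(2t)`, everything
cancels: the exponent `(n−1)/2` of the prefactor matches the trace `n − 1` of the Hessian on `ν^⊥`. -/

open scoped InnerProductSpace

section Gaussian

variable {E : Type*} [NormedAddCommGroup E] [InnerProductSpace ℝ E] (C a : ℝ)

theorem hasFDerivAt_const_mul_exp_mul_norm_sq (y : E) :
    HasFDerivAt (fun z : E => C * exp (a * ‖z‖ ^ 2))
      ((2 * a * (C * exp (a * ‖y‖ ^ 2))) • innerSL ℝ y) y := by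
  refine ((((hasStrictFDerivAt_norm_sq y).hasFDerivAt.const_mul a).exp).const_mul C).congr_fderiv ?_
  ext v
  simp only [smul_apply, coe_innerSL_apply, nsmul_eq_mul, Nat.cast_ofNat, smul_eq_mul]
  ring

theorem fderiv_const_mul_exp_mul_norm_sq_apply (y v : E) :
    fderiv ℝ (fun z : E => C * exp (a * ‖z‖ ^ 2)) y v
      = 2 * a * (C * exp (a * ‖y‖ ^ 2)) * ⟪y, v⟫_ℝ := by
  simp only [(hasFDerivAt_const_mul_exp_mul_norm_sq C a y).fderiv, smul_apply, coe_innerSL_apply,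
    smul_eq_mul]

theorem fderiv_fderiv_const_mul_exp_mul_norm_sq_apply (x v w : E) :
    fderiv ℝ (fun y => fderiv ℝ (fun z : E => C * exp (a * ‖z‖ ^ 2)) y v) x w
      = 2 * a * (C * exp (a * ‖x‖ ^ 2)) * (2 * a * ⟪x, w⟫_ℝ * ⟪x, v⟫_ℝ + ⟪w, v⟫_ℝ) := by
  have hfun : (fun y => fderiv ℝ (fun z : E => C * exp (a * ‖z‖ ^ 2)) y v)
      = fun y => 2 * a * (C * exp (a * ‖y‖ ^ 2)) * ⟪v, y⟫_ℝ := by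
    funext y
    rw [fderiv_const_mul_exp_mul_norm_sq_apply, real_inner_comm]
  have hderiv : HasFDerivAt (fun y => 2 * a * (C * exp (a * ‖y‖ ^ 2)) * ⟪v, y⟫_ℝ) _ x :=
    ((hasFDerivAt_const_mul_exp_mul_norm_sq C a x).const_mul (2 * a)).mul (innerSL ℝ v).hasFDerivAt
  rw [hfun, hderiv.fderiv]
  simp only [add_apply, smul_apply, coe_innerSL_apply, smul_eq_mul, real_inner_comm x v,
    real_inner_comm w v]
  ring

theorem sum_fderiv_fderiv_const_mul_exp_mul_norm_sq {ι : Type*} [Fintype ι]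
    (b : OrthonormalBasis ι ℝ E) (x : E) :
    ∑ i, fderiv ℝ (fun y => fderiv ℝ (fun z : E => C * exp (a * ‖z‖ ^ 2)) y (b i)) x (b i)
      = 2 * a * (C * exp (a * ‖x‖ ^ 2)) * (2 * a * ‖x‖ ^ 2 + Fintype.card ι) := by
  have hnorm : ∑ i, ⟪x, b i⟫_ℝ * ⟪x, b i⟫_ℝ = ‖x‖ ^ 2 := by
    simpa only [fun i => real_inner_comm x (b i), real_inner_self_eq_norm_sq]
      using b.sum_inner_mul_inner x x
  simp only [fderiv_fderiv_const_mul_exp_mul_norm_sq_apply, real_inner_self_eq_norm_sq,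
    b.norm_eq_one, one_pow, ← Finset.mul_sum, Finset.sum_add_distrib, mul_assoc (2 * a),
    ← Finset.mul_sum, hnorm, Finset.sum_const, Finset.card_univ, nsmul_eq_mul, mul_one]

end Gaussian

theorem backwardsHeatKernel_eq (n : ℕ) (z : EuclideanSpace ℝ (Fin n)) (t : ℝ) :
    backwardsHeatKernel n z t
      = (4 * π * (-t)) ^ (-(((n : ℝ) - 1) / 2)) * exp ((4 * t)⁻¹ * ‖z‖ ^ 2) := by
  rw [backwardsHeatKernel]
  ring_nf

theorem backwardsHeatKernel_pos (n : ℕ) (z : EuclideanSpace ℝ (Fin n)) {t : ℝ} (ht : t < 0) :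
    0 < backwardsHeatKernel n z t := by
  have hbase : 0 < 4 * π * (-t) := by have := pi_pos; nlinarith
  exact mul_pos (rpow_pos_of_pos hbase _) (exp_pos _)

theorem hasDerivAt_backwardsHeatKernel_time (n : ℕ) (x : EuclideanSpace ℝ (Fin n)) {t : ℝ}
    (ht : t < 0) :
    HasDerivAt (fun s => backwardsHeatKernel n x s)
      (backwardsHeatKernel n x t * (((n : ℝ) - 1) / (2 * (-t)) - ‖x‖ ^ 2 / (4 * t ^ 2))) t := by
  have hbase : 0 < 4 * π * (-t) := by have := pi_pos; nlinarith
  have hpow : HasDerivAt (fun s => (4 * π * (-s)) ^ (-(((n : ℝ) - 1) / 2))) _ t :=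
    (((hasDerivAt_neg t).const_mul (4 * π)).rpow_const (Or.inl hbase.ne'))
  have hexp : HasDerivAt (fun s => exp ((4 * s)⁻¹ * ‖x‖ ^ 2)) _ t :=
    ((((hasDerivAt_id t).const_mul 4).inv (by simp [ht.ne])).mul_const (‖x‖ ^ 2)).exp
  rw [show (fun s => backwardsHeatKernel n x s) = _ from funext (backwardsHeatKernel_eq n x)]
  refine (hpow.mul hexp).congr_deriv ?_
  simp only [Pi.inv_apply, id]
  rw [backwardsHeatKernel_eq, rpow_sub_one hbase.ne']
  field_simp
  ring

theorem huisken_kernel_identity_general (n : ℕ)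
    (t : ℝ) (ht : t < 0) (x : EuclideanSpace ℝ (Fin n))
    (ν : EuclideanSpace ℝ (Fin n)) (hν : ‖ν‖ = 1) :
    (∑ i : Fin n,
        fderiv ℝ (fun y => fderiv ℝ (fun z => backwardsHeatKernel n z t) y
          (EuclideanSpace.single i 1)) x (EuclideanSpace.single i 1))
      - fderiv ℝ (fun y => fderiv ℝ (fun z => backwardsHeatKernel n z t) y ν) x ν
      + (fderiv ℝ (fun z => backwardsHeatKernel n z t) x ν) ^ 2 / backwardsHeatKernel n x t
      + deriv (fun s => backwardsHeatKernel n x s) t = 0 := by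
  have hspatial : (fun z => backwardsHeatKernel n z t)
      = fun z => (4 * π * (-t)) ^ (-(((n : ℝ) - 1) / 2)) * exp ((4 * t)⁻¹ * ‖z‖ ^ 2) :=
    funext fun z => backwardsHeatKernel_eq n z t
  have hlaplacian := sum_fderiv_fderiv_const_mul_exp_mul_norm_sq
    ((4 * π * (-t)) ^ (-(((n : ℝ) - 1) / 2))) (4 * t)⁻¹ (EuclideanSpace.basisFun (Fin n) ℝ) x
  simp only [EuclideanSpace.basisFun_apply, Fintype.card_fin] at hlaplacian
  have hρ := (backwardsHeatKernel_pos n x ht).ne'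
  have ht0 : t ≠ 0 := ht.ne
  rw [(hasDerivAt_backwardsHeatKernel_time n x ht).deriv, hspatial, hlaplacian,
    fderiv_fderiv_const_mul_exp_mul_norm_sq_apply, fderiv_const_mul_exp_mul_norm_sq_apply,
    real_inner_self_eq_norm_sq, hν, ← backwardsHeatKernel_eq]
  field_simp
  ring

/-- The pointwise 'miracle' behind Huisken's monotonicity formula: for the backwards
heat kernel `ρ` (with the `(n−1)`-dimensional scaling), for any unit vector `ν`,
`Δρ − Hess ρ(ν,ν) + (∇ρ·ν)²/ρ + ρ_t = 0`, where spatial derivatives are taken in `x`. -/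
theorem huisken_kernel_identity (n : ℕ) (hn : 2 ≤ n)
    (t : ℝ) (ht : t < 0) (x : EuclideanSpace ℝ (Fin n))
    (ν : EuclideanSpace ℝ (Fin n)) (hν : ‖ν‖ = 1) :
    (∑ i : Fin n,
        fderiv ℝ (fun y => fderiv ℝ (fun z => backwardsHeatKernel n z t) y
          (EuclideanSpace.single i 1)) x (EuclideanSpace.single i 1))
      - fderiv ℝ (fun y => fderiv ℝ (fun z => backwardsHeatKernel n z t) y ν) x ν
      + (fderiv ℝ (fun z => backwardsHeatKernel n z t) x ν) ^ 2 / backwardsHeatKernel n x t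
      + deriv (fun s => backwardsHeatKernel n x s) t = 0 :=
  huisken_kernel_identity_general n t ht x ν hν
end

section
/- Let n ≥ 2 be an integer, L > 0, and let γ : ℝ → ℝⁿ be a C² curve that is L-periodic (γ(s + L) = γ(s) for all s) and parametrized by arclength (‖γ′(s)‖ = 1 for all s). Then ∫₀^L ‖γ″(s)‖ ds ≥ 2π. -/
/-!
The unit tangent `T = γ'` is a closed curve on the unit sphere whose length is the total
curvature `K`, and the angle between two points of `T` is at most the length of the arc joining
them. If `a` halves the length of `T`, then every `T s` is within total angle `K / 2` of `T 0` and
`T a`, so for `K < 2π` we get `0 < ⟪T 0 + T a, T s⟫` for all `s`. Then `s ↦ ⟪T 0 + T a, γ s⟫` is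
strictly increasing on a period, contradicting `γ L = γ 0`.
-/

open Real Set Filter Topology InnerProductGeometry
open scoped RealInnerProductSpace

section UnitVectors

variable {E : Type*} [NormedAddCommGroup E] [InnerProductSpace ℝ E] {u v w : E}

theorem norm_sub_eq_two_mul_sin_half_angle (hu : ‖u‖ = 1) (hv : ‖v‖ = 1) :
    ‖u - v‖ = 2 * sin (angle u v / 2) := by
  have hcos := norm_sub_sq_eq_norm_sq_add_norm_sq_sub_two_mul_norm_mul_norm_mul_cos_angle u v
  rw [hu, hv] at hcos
  have hθ : 0 ≤ angle u v := angle_nonneg u v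
  have hsin : 0 ≤ sin (angle u v / 2) :=
    sin_nonneg_of_nonneg_of_le_pi (by linarith) (by linarith [angle_le_pi u v])
  rw [← sq_eq_sq₀ (norm_nonneg _) (by positivity), sq, hcos, mul_pow, sin_sq_eq_half_sub]
  ring_nf

theorem angle_le_norm_sub_add_norm_sub_pow_three (hu : ‖u‖ = 1) (hv : ‖v‖ = 1) :
    angle u v ≤ ‖u - v‖ + ‖u - v‖ ^ 3 := by
  set θ := angle u v
  set d := ‖u - v‖
  have hd : d = 2 * sin (θ / 2) := norm_sub_eq_two_mul_sin_half_angle hu hv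
  have hθ : 0 ≤ θ := angle_nonneg u v
  have hθπ : θ ≤ π := angle_le_pi u v
  have h_cube : θ - θ ^ 3 / 24 ≤ d := by
    rcases hθ.eq_or_lt with h0 | hpos
    · simp [← h0, d]
    · have := sin_gt_sub_cube (half_pos hpos)
      rw [hd]; nlinarith
  have h_jordan : θ ≤ 2 * d := by
    have hd0 : 0 ≤ d := norm_nonneg _
    calc θ = π * (2 / π * (θ / 2)) := by field_simp
      _ ≤ π * sin (θ / 2) := by gcongr; exact mul_le_sin (by positivity) (by linarith)
      _ = π / 2 * d := by rw [hd]; ring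
      _ ≤ 2 * d := by gcongr; linarith [pi_le_four]
  have : θ ^ 3 ≤ 8 * d ^ 3 := by
    calc θ ^ 3 ≤ (2 * d) ^ 3 := pow_le_pow_left₀ hθ h_jordan 3
      _ = 8 * d ^ 3 := by ring
  have : 0 ≤ d ^ 3 := by positivity
  linarith

theorem inner_add_pos_of_angle_add_angle_lt_pi (hu : ‖u‖ = 1) (hv : ‖v‖ = 1) (hw : ‖w‖ = 1)
    (h : angle u w + angle v w < π) : 0 < ⟪u + v, w⟫ := by
  have hcos : cos (π - angle v w) < cos (angle u w) :=
    cos_lt_cos_of_nonneg_of_le_pi (angle_nonneg u w) (by linarith [angle_nonneg v w])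
      (by linarith)
  rw [cos_pi_sub] at hcos
  rw [inner_add_left, inner_eq_cos_angle_of_norm_eq_one hu hw,
    inner_eq_cos_angle_of_norm_eq_one hv hw]
  linarith

end UnitVectors

section UnitCurves

variable {E : Type*} [NormedAddCommGroup E] [InnerProductSpace ℝ E] {c : ℝ → E}

theorem eventually_angle_div_sub_lt {c' : E} {x r : ℝ} (hc : HasDerivAt c c' x)
    (hunit : ∀ s, ‖c s‖ = 1) (hr : ‖c'‖ < r) :
    ∀ᶠ z in 𝓝[>] x, angle (c x) (c z) / (z - x) < r := by
  have hslope : Tendsto (slope c x) (𝓝[>] x) (𝓝 c') :=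
    (hasDerivAt_iff_tendsto_slope.mp hc).mono_left (nhdsWithin_mono _ fun _ h => ne_of_gt h)
  have hchord : Tendsto (fun z => ‖c z - c x‖) (𝓝[>] x) (𝓝 0) :=
    (tendsto_iff_norm_sub_tendsto_zero.mp hc.continuousAt.tendsto).mono_left nhdsWithin_le_nhds
  have hlim : Tendsto (fun z => ‖slope c x z‖ * (1 + ‖c z - c x‖ ^ 2)) (𝓝[>] x) (𝓝 ‖c'‖) := by
    simpa using hslope.norm.mul ((hchord.pow 2).const_add 1)
  filter_upwards [hlim.eventually (gt_mem_nhds hr), self_mem_nhdsWithin] with z hz hxz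
  have hxz : 0 < z - x := sub_pos.mpr hxz
  calc angle (c x) (c z) / (z - x) ≤ (‖c z - c x‖ + ‖c z - c x‖ ^ 3) / (z - x) := by
        gcongr
        rw [angle_comm]
        exact angle_le_norm_sub_add_norm_sub_pow_three (hunit z) (hunit x)
    _ = ‖slope c x z‖ * (1 + ‖c z - c x‖ ^ 2) := by
        rw [slope_def_module, norm_smul, norm_inv, norm_of_nonneg hxz.le]
        field_simp
    _ < r := hz

theorem angle_le_integral_norm_deriv (hc : ContDiff ℝ 1 c) (hunit : ∀ s, ‖c s‖ = 1) {a b : ℝ}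
    (hab : a ≤ b) : angle (c a) (c b) ≤ ∫ s in a..b, ‖deriv c s‖ := by
  have hderiv : ∀ s, HasDerivAt c (deriv c s) s :=
    fun s => (hc.differentiable one_ne_zero s).hasDerivAt
  have hspeed : Continuous fun s => ‖deriv c s‖ := (hc.continuous_deriv le_rfl).norm
  have hlength : ∀ s, HasDerivAt (fun t => ∫ u in a..t, ‖deriv c u‖) ‖deriv c s‖ s :=
    fun s => (hspeed.integral_hasStrictDerivAt a s).hasDerivAt
  have hne : ∀ s, c s ≠ 0 := fun s => norm_ne_zero_iff.mp (by simp [hunit])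
  -- Fencing: by the triangle inequality for angles, the right Dini derivative of
  -- `s ↦ angle (c a) (c s)` is at most `‖deriv c s‖`.
  refine image_le_of_liminf_slope_right_le_deriv_boundary (f := fun s => angle (c a) (c s))
    (fun s _ => ?_) (by simp [angle_self (hne a)])
    (fun s _ => (hlength s).continuousAt.continuousWithinAt)
    (fun s _ => (hlength s).hasDerivWithinAt) (fun x _ r hr => ?_) ⟨hab, le_rfl⟩
  · exact ((continuousAt_angle (hne a) (hne s)).comp
      (continuousAt_const.prodMk (hderiv s).continuousAt)).continuousWithinAt
  · refine ((eventually_angle_div_sub_lt (hderiv x) hunit hr).and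
      self_mem_nhdsWithin).frequently.mono fun z ⟨hz, hxz⟩ => lt_of_le_of_lt ?_ hz
    rw [slope_def_field]
    gcongr
    linarith [angle_le_angle_add_angle (c a) (c x) (c z)]

theorem exists_forall_inner_pos_of_integral_norm_deriv_lt_two_pi (hc : ContDiff ℝ 1 c)
    (hunit : ∀ s, ‖c s‖ = 1) {L : ℝ} (hL : 0 ≤ L) (hclosed : c L = c 0)
    (hlen : ∫ s in 0..L, ‖deriv c s‖ < 2 * π) : ∃ p, ∀ s ∈ Icc 0 L, 0 < ⟪p, c s⟫ := by
  set K := ∫ s in 0..L, ‖deriv c s‖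
  have hspeed : Continuous fun s => ‖deriv c s‖ := (hc.continuous_deriv le_rfl).norm
  have hadd : ∀ u v w : ℝ, (∫ s in u..v, ‖deriv c s‖) + ∫ s in v..w, ‖deriv c s‖ =
      ∫ s in u..w, ‖deriv c s‖ := fun u v w =>
    intervalIntegral.integral_add_adjacent_intervals (hspeed.intervalIntegrable u v)
      (hspeed.intervalIntegrable v w)
  have hK : 0 ≤ K := intervalIntegral.integral_nonneg hL fun s _ => norm_nonneg _
  obtain ⟨a, -, hhalf⟩ : ∃ a ∈ Icc 0 L, ∫ s in 0..a, ‖deriv c s‖ = K / 2 :=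
    intermediate_value_Icc hL (intervalIntegral.continuous_primitive
      (fun u v => hspeed.intervalIntegrable u v) 0).continuousOn
      (by simp only [intervalIntegral.integral_same]; constructor <;> linarith)
  refine ⟨c 0 + c a, fun s hs => inner_add_pos_of_angle_add_angle_lt_pi (hunit 0) (hunit a)
    (hunit s) ?_⟩
  suffices angle (c 0) (c s) + angle (c a) (c s) ≤ K / 2 by linarith
  rcases le_total s a with hsa | has
  · have h0 := angle_le_integral_norm_deriv hc hunit hs.1
    have ha := angle_le_integral_norm_deriv hc hunit hsa
    rw [angle_comm] at ha
    linarith [hadd 0 s a]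
  · have ha := angle_le_integral_norm_deriv hc hunit has
    have h0 := angle_le_integral_norm_deriv hc hunit hs.2
    rw [hclosed, angle_comm] at h0
    linarith [hadd 0 a L, hadd a s L]

end UnitCurves

theorem total_curvature_ge_two_pi_general (n : ℕ) (L : ℝ) (hL : 0 < L)
    (γ : ℝ → EuclideanSpace ℝ (Fin n))
    (hreg : ContDiff ℝ 2 γ)
    (hper : ∀ s, γ (s + L) = γ s)
    (hspeed : ∀ s, ‖deriv γ s‖ = 1) :
    2 * π ≤ ∫ s in (0 : ℝ)..L, ‖deriv (deriv γ) s‖ := by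
  have hT : ContDiff ℝ 1 (deriv γ) := hreg.deriv'
  have hclosed : γ L = γ 0 := by simpa using hper 0
  have hTclosed : deriv γ L = deriv γ 0 := by
    simpa [deriv_comp_add_const] using congrArg (deriv · 0) (funext hper)
  by_contra! hlen
  obtain ⟨p, hp⟩ := exists_forall_inner_pos_of_integral_norm_deriv_lt_two_pi hT hspeed hL.le
    hTclosed hlen
  have hγ : Differentiable ℝ γ := hreg.differentiable two_ne_zero
  have hmono : StrictMonoOn (fun s => ⟪p, γ s⟫) (Icc 0 L) := by
    refine strictMonoOn_of_deriv_pos (convex_Icc 0 L)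
      (continuous_const.inner hγ.continuous).continuousOn fun s hs => ?_
    rw [interior_Icc] at hs
    simpa [deriv_inner_apply ℝ (differentiableAt_const p) (hγ s)] using
      hp s (Ioo_subset_Icc_self hs)
  simpa [hclosed] using hmono ⟨le_rfl, hL.le⟩ ⟨hL.le, le_rfl⟩ hL

/-- Borsuk–Fenchel theorem (single component): a closed unit-speed `C²` curve in `ℝⁿ`
has total curvature `∫₀^L ‖γ″‖ ≥ 2π`. -/
theorem total_curvature_ge_two_pi (n : ℕ) (hn : 2 ≤ n) (L : ℝ) (hL : 0 < L)
    (γ : ℝ → EuclideanSpace ℝ (Fin n))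
    (hreg : ContDiff ℝ 2 γ)
    (hper : ∀ s, γ (s + L) = γ s)
    (hspeed : ∀ s, ‖deriv γ s‖ = 1) :
    2 * π ≤ ∫ s in (0 : ℝ)..L, ‖deriv (deriv γ) s‖ :=
  total_curvature_ge_two_pi_general n L hL γ hreg hper hspeed
end

section
/- Let p, q ≥ 2 be integers, a > 0, ε > 0, and let u : [0, ε) → (0, ∞) be a C² function with u(0) = a that solves the minimal surface ODE u″/(1+u′²) + ((p−1)/r)·u′ − (q−1)/u = 0 on (0, ε). Then necessarily u′(0) = 0 and u″(0) = (q−1)/(p·a); in particular u′(r) > 0 for all sufficiently small r > 0. -/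
open Set Filter Topology

/-!
Writing the ODE as `(p - 1) · u′(r)/r = (q - 1)/u(r) - u″(r)/(1 + u′(r)²)`, the right-hand side
is continuous up to `r = 0`, so `u′(r)/r` has a finite limit as `r → 0⁺`. This forces
`u′(0) = 0`, and then `u′(r)/r → u″(0)`; passing to the limit gives
`(p - 1) u″(0) = (q - 1)/a - u″(0)`. Since `u″(0) > 0` and `u′(0) = 0`, `u′ > 0` just right of `0`.
-/

theorem eq_zero_of_tendsto_div_nhdsGT {v : ℝ → ℝ} {L : ℝ}
    (hv : ContinuousWithinAt v (Ioi 0) 0) (h : Tendsto (fun r ↦ v r / r) (𝓝[>] 0) (𝓝 L)) :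
    v 0 = 0 := by
  have hr : Tendsto (fun r : ℝ ↦ r) (𝓝[>] 0) (𝓝 0) := tendsto_nhdsWithin_of_tendsto_nhds tendsto_id
  have hv_zero : Tendsto v (𝓝[>] 0) (𝓝 0) := by
    refine (zero_mul L ▸ hr.mul h).congr' ?_
    filter_upwards [self_mem_nhdsWithin] with r (hr : 0 < r)
    exact mul_div_cancel₀ _ hr.ne'
  exact tendsto_nhds_unique hv hv_zero

theorem HasDerivWithinAt.tendsto_div_nhdsGT {v : ℝ → ℝ} {v' : ℝ}
    (hv : HasDerivWithinAt v v' (Ioi 0) 0) (hv0 : v 0 = 0) :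
    Tendsto (fun r ↦ v r / r) (𝓝[>] 0) (𝓝 v') := by
  refine ((hasDerivWithinAt_iff_tendsto_slope' (lt_irrefl 0)).mp hv).congr fun r ↦ ?_
  rw [slope_def_field, hv0, sub_zero, sub_zero]

theorem eq_zero_and_mul_eq_of_mul_div_eq {v F : ℝ → ℝ} {v' c : ℝ} (hc : c ≠ 0)
    (hv : HasDerivWithinAt v v' (Ioi 0) 0) (hF : ContinuousWithinAt F (Ioi 0) 0)
    (h : ∀ᶠ r in 𝓝[>] 0, c * (v r / r) = F r) :
    v 0 = 0 ∧ c * v' = F 0 := by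
  have hlim : Tendsto (fun r ↦ v r / r) (𝓝[>] 0) (𝓝 (F 0 / c)) := by
    refine (hF.div_const c).congr' ?_
    filter_upwards [h] with r hr
    rw [← hr, mul_div_cancel_left₀ _ hc]
  have hv0 : v 0 = 0 := eq_zero_of_tendsto_div_nhdsGT hv.continuousWithinAt hlim
  refine ⟨hv0, ?_⟩
  rw [tendsto_nhds_unique (hv.tendsto_div_nhdsGT hv0) hlim, mul_div_cancel₀ _ hc]

theorem eventually_pos_of_tendsto_div_nhdsGT {v : ℝ → ℝ} {L : ℝ} (hL : 0 < L)
    (h : Tendsto (fun r ↦ v r / r) (𝓝[>] 0) (𝓝 L)) :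
    ∀ᶠ r in 𝓝[>] 0, 0 < v r := by
  filter_upwards [h.eventually (eventually_gt_nhds hL), self_mem_nhdsWithin]
    with r hquot (hr : 0 < r)
  exact (div_pos_iff_of_pos_right hr).mp hquot

theorem exists_Ioo_forall_of_eventually_nhdsGT {P : ℝ → Prop} {ε : ℝ} (hε : 0 < ε)
    (h : ∀ᶠ r in 𝓝[>] 0, P r) :
    ∃ δ > (0 : ℝ), δ ≤ ε ∧ ∀ r ∈ Ioo 0 δ, P r := by
  obtain ⟨b, hb, hsub⟩ := mem_nhdsGT_iff_exists_Ioo_subset.mp h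
  exact ⟨min b ε, lt_min hb hε, min_le_right _ _,
    fun r hr ↦ hsub ⟨hr.1, hr.2.trans_le (min_le_left _ _)⟩⟩

theorem forced_orthogonality_at_axis_general (p q : ℕ) (hp : 2 ≤ p) (hq : 2 ≤ q)
    (a ε : ℝ) (ha : 0 < a) (hε : 0 < ε)
    (u : ℝ → ℝ)
    (hreg : ContDiffOn ℝ 2 u (Set.Ico 0 ε))
    (hu0 : u 0 = a)
    (hODE : ∀ r ∈ Set.Ioo (0 : ℝ) ε,
        derivWithin (derivWithin u (Set.Ico 0 ε)) (Set.Ico 0 ε) r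
            / (1 + (derivWithin u (Set.Ico 0 ε) r) ^ 2)
          + (((p : ℝ) - 1) / r) * derivWithin u (Set.Ico 0 ε) r
          - ((q : ℝ) - 1) / u r = 0) :
    derivWithin u (Set.Ico 0 ε) 0 = 0 ∧
    derivWithin (derivWithin u (Set.Ico 0 ε)) (Set.Ico 0 ε) 0 = ((q : ℝ) - 1) / ((p : ℝ) * a) ∧
    ∃ δ > (0 : ℝ), δ ≤ ε ∧ ∀ r ∈ Set.Ioo (0 : ℝ) δ, 0 < derivWithin u (Set.Ico 0 ε) r := by
  set S := Ico (0 : ℝ) ε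
  set v := derivWithin u S
  set w := derivWithin v S
  set F : ℝ → ℝ := fun r ↦ ((q : ℝ) - 1) / u r - w r / (1 + v r ^ 2)
  have hp1 : (1 : ℝ) < p := by exact_mod_cast hp
  have hq1 : (1 : ℝ) < q := by exact_mod_cast hq
  have h0S : (0 : ℝ) ∈ S := ⟨le_rfl, hε⟩
  have hS : S ∈ 𝓝[>] (0 : ℝ) := mem_of_superset (Ioo_mem_nhdsGT hε) Ioo_subset_Ico_self
  have hv : ContDiffOn ℝ 1 v S := hreg.derivWithin (uniqueDiffOn_Ico 0 ε) (by norm_num)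
  have hvw : HasDerivWithinAt v (w 0) (Ioi 0) 0 :=
    ((hv.differentiableOn one_ne_zero 0 h0S).hasDerivWithinAt).mono_of_mem_nhdsWithin hS
  have hF : ContinuousWithinAt F (Ioi 0) 0 := by
    have hu := hreg.continuousOn 0 h0S
    have hvc := hv.continuousOn 0 h0S
    have hwc := hv.continuousOn_derivWithin (uniqueDiffOn_Ico 0 ε) le_rfl 0 h0S
    refine ContinuousWithinAt.mono_of_mem_nhdsWithin ?_ hS
    exact (continuousWithinAt_const.div hu (hu0 ▸ ha.ne')).sub
      (hwc.div (continuousWithinAt_const.add (hvc.pow 2)) (by positivity))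
  have hsing : ∀ᶠ r in 𝓝[>] 0, ((p : ℝ) - 1) * (v r / r) = F r := by
    filter_upwards [Ioo_mem_nhdsGT hε] with r hr
    rw [← mul_comm_div]
    linarith [hODE r hr]
  obtain ⟨hv0, hw0⟩ := eq_zero_and_mul_eq_of_mul_div_eq (by linarith) hvw hF hsing
  have hw0_eq : w 0 = ((q : ℝ) - 1) / ((p : ℝ) * a) := by
    simp only [F, hv0, hu0] at hw0
    field_simp at hw0 ⊢
    linarith
  have hw0_pos : 0 < w 0 := hw0_eq ▸ div_pos (by linarith) (by positivity)
  exact ⟨hv0, hw0_eq, exists_Ioo_forall_of_eventually_nhdsGT hε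
    (eventually_pos_of_tendsto_div_nhdsGT hw0_pos (hvw.tendsto_div_nhdsGT hv0))⟩

/-- At the singular point `r = 0` of the rotationally symmetric minimal surface ODE,
any positive `C²` solution on `[0, ε)` with `u(0) = a` is forced to have `u′(0) = 0`
and `u″(0) = (q−1)/(p·a)`; in particular `u′ > 0` for all sufficiently small `r > 0`. -/
theorem forced_orthogonality_at_axis (p q : ℕ) (hp : 2 ≤ p) (hq : 2 ≤ q)
    (a ε : ℝ) (ha : 0 < a) (hε : 0 < ε)
    (u : ℝ → ℝ)
    (hreg : ContDiffOn ℝ 2 u (Set.Ico 0 ε))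
    (hpos : ∀ r ∈ Set.Ico (0 : ℝ) ε, 0 < u r)
    (hu0 : u 0 = a)
    (hODE : ∀ r ∈ Set.Ioo (0 : ℝ) ε,
        derivWithin (derivWithin u (Set.Ico 0 ε)) (Set.Ico 0 ε) r
            / (1 + (derivWithin u (Set.Ico 0 ε) r) ^ 2)
          + (((p : ℝ) - 1) / r) * derivWithin u (Set.Ico 0 ε) r
          - ((q : ℝ) - 1) / u r = 0) :
    derivWithin u (Set.Ico 0 ε) 0 = 0 ∧
    derivWithin (derivWithin u (Set.Ico 0 ε)) (Set.Ico 0 ε) 0 = ((q : ℝ) - 1) / ((p : ℝ) * a) ∧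
    ∃ δ > (0 : ℝ), δ ≤ ε ∧ ∀ r ∈ Set.Ioo (0 : ℝ) δ, 0 < derivWithin u (Set.Ico 0 ε) r :=
  forced_orthogonality_at_axis_general p q hp hq a ε ha hε u hreg hu0 hODE
end

section
/- Let p, q ≥ 2 be integers and λ_s = √((q−1)/(p−1)). Fix 0 < c ≤ λ_s and set C = λ_s²/c, so the square [c, C]² has two corners on the line X = Y and two corners on the hyperbola XY = λ_s². Then the square [c, C]² is forward-invariant for the (non-autonomous) system X′(η) = Y − X, Y′(η) = (1 + Y²)·[ (p−1)(λ_s² − XY)/X − (e^{2η}/2)(Y − X) ]: if (X, Y) is a C¹ solution on an interval [η₀, η₁] with (X(η₀), Y(η₀)) ∈ [c, C]², then (X(η), Y(η)) ∈ [c, C]² for all η ∈ [η₀, η₁]. -/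
/-!
Let `g` be the `ℓ¹`-distance from `(X, Y)` to the square. On the sides of the square the
field points weakly inward: at `X = c` and `X = C` this is the sign of `Y - X`, and at `Y = c`
(resp. `Y = C`) both terms of `Y'` have the right sign because `XY ≤ cC = λ²` and `Y ≤ X`
(resp. `XY ≥ λ²` and `Y ≥ X`). Off the square these signs fail by at most a constant times `g`,
as long as `X` stays away from `0` and `Y` stays bounded; then the right derivative of `g` is at
most `K g`, and Grönwall's inequality keeps `g = 0`. The a priori bounds hold near every time at
which the solution lies in the square, so a continuous induction covers the whole interval.
-/

open Real Set Filter Topology Asymptotics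

noncomputable def posPartRightDeriv (a d : ℝ) : ℝ :=
  if 0 < a then d else if a < 0 then 0 else d⁺

lemma posPartRightDeriv_le {a d m : ℝ} (hm : 0 ≤ m) (h : 0 ≤ a → d ≤ m) :
    posPartRightDeriv a d ≤ m := by
  unfold posPartRightDeriv
  split_ifs with hpos hneg
  · exact h hpos.le
  · exact hm
  · exact max_le (h (not_lt.1 hneg)) hm

theorem HasDerivWithinAt.posPart_Ici {h : ℝ → ℝ} {h' x : ℝ}
    (H : HasDerivWithinAt h h' (Ici x) x) :
    HasDerivWithinAt (fun t => (h t)⁺) (posPartRightDeriv (h x) h') (Ici x) x := by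
  rcases lt_trichotomy 0 (h x) with hpos | hzero | hneg
  · have hev : (fun t => (h t)⁺) =ᶠ[𝓝[≥] x] h :=
      (H.continuousWithinAt.eventually (Ioi_mem_nhds hpos)).mono fun t ht =>
        posPart_eq_self.2 (le_of_lt ht)
    simpa [posPartRightDeriv, hpos] using
      H.congr_of_eventuallyEq hev (posPart_eq_self.2 hpos.le)
  · rw [hasDerivWithinAt_iff_isLittleO] at H ⊢
    refine IsBigO.trans_isLittleO (IsBigO.of_bound 1 ?_) H
    filter_upwards [self_mem_nhdsWithin] with t (ht : x ≤ t)
    have hscale : (t - x) * max h' 0 = max ((t - x) * h') 0 := by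
      rw [mul_max_of_nonneg _ _ (sub_nonneg.2 ht), mul_zero]
    simpa [posPartRightDeriv, ← hzero, hscale, posPart_def] using
      abs_max_sub_max_le_abs (h t) ((t - x) * h') 0
  · have hev : (fun t => (h t)⁺) =ᶠ[𝓝[≥] x] fun _ => 0 :=
      (H.continuousWithinAt.eventually (Iio_mem_nhds hneg)).mono fun t ht =>
        posPart_eq_zero.2 (le_of_lt ht)
    simpa [posPartRightDeriv, hneg, hneg.not_gt] using
      (hasDerivWithinAt_const x (Ici x) (0 : ℝ)).congr_of_eventuallyEq hev
        (posPart_eq_zero.2 hneg.le)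

def gapIcc (lo hi x : ℝ) : ℝ := (lo - x)⁺ + (x - hi)⁺

section gapIcc

variable {lo hi x : ℝ}

lemma gapIcc_nonneg : 0 ≤ gapIcc lo hi x :=
  add_nonneg (posPart_nonneg _) (posPart_nonneg _)

lemma sub_le_gapIcc_left : lo - x ≤ gapIcc lo hi x :=
  (le_posPart _).trans (le_add_of_nonneg_right (posPart_nonneg _))

lemma sub_le_gapIcc_right : x - hi ≤ gapIcc lo hi x :=
  (le_posPart _).trans (le_add_of_nonneg_left (posPart_nonneg _))

lemma gapIcc_nonpos_iff : gapIcc lo hi x ≤ 0 ↔ x ∈ Icc lo hi := by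
  refine ⟨fun h => ?_, fun h => ?_⟩
  · constructor <;> linarith [sub_le_gapIcc_left (lo := lo) (hi := hi) (x := x),
      sub_le_gapIcc_right (lo := lo) (hi := hi) (x := x)]
  · simp [gapIcc, posPart_eq_zero.2 (sub_nonpos.2 h.1), posPart_eq_zero.2 (sub_nonpos.2 h.2)]

lemma continuous_gapIcc : Continuous (gapIcc lo hi) := by
  unfold gapIcc
  fun_prop

end gapIcc

theorem mem_Icc_of_hasDerivWithinAt_of_inward {ι : Type*} [Fintype ι] {z z' : ι → ℝ → ℝ}
    {lo hi K a b : ℝ}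
    (hz : ∀ i, ∀ t ∈ Icc a b, HasDerivWithinAt (z i) (z' i t) (Icc a b) t)
    (hlo : ∀ i, ∀ t ∈ Ico a b, z i t ≤ lo → -(K * ∑ j, gapIcc lo hi (z j t)) ≤ z' i t)
    (hhi : ∀ i, ∀ t ∈ Ico a b, hi ≤ z i t → z' i t ≤ K * ∑ j, gapIcc lo hi (z j t))
    (ha : ∀ i, z i a ∈ Icc lo hi) :
    ∀ t ∈ Icc a b, ∀ i, z i t ∈ Icc lo hi := by
  set v : ℝ → ℝ := fun t => ∑ j, gapIcc lo hi (z j t)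
  set v' : ℝ → ℝ := fun t => ∑ i, (posPartRightDeriv (lo - z i t) (-z' i t)
    + posPartRightDeriv (z i t - hi) (z' i t))
  have hv_cont : ContinuousOn v (Icc a b) := continuousOn_finsetSum _ fun i _ =>
    continuous_gapIcc.comp_continuousOn fun t ht => (hz i t ht).continuousWithinAt
  have hv_deriv (t : ℝ) (ht : t ∈ Ico a b) : HasDerivWithinAt v (v' t) (Ici t) t := by
    refine HasDerivWithinAt.fun_sum fun i _ => ?_
    have hzi := (hz i t (Ico_subset_Icc_self ht)).mono_of_mem_nhdsWithin
      (Icc_mem_nhdsGE_of_mem ht)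
    exact ((hzi.const_sub lo).posPart_Ici).add ((hzi.sub_const hi).posPart_Ici)
  have hv_bound (t : ℝ) (ht : t ∈ Ico a b) :
      v' t ≤ 2 * Fintype.card ι * max K 0 * v t + 0 := by
    have hKv : K * v t ≤ max K 0 * v t :=
      mul_le_mul_of_nonneg_right (le_max_left K 0) (Finset.sum_nonneg fun j _ => gapIcc_nonneg)
    have hKv0 : 0 ≤ max K 0 * v t :=
      mul_nonneg (le_max_right K 0) (Finset.sum_nonneg fun j _ => gapIcc_nonneg)
    have hterm (i : ι) : posPartRightDeriv (lo - z i t) (-z' i t)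
        + posPartRightDeriv (z i t - hi) (z' i t) ≤ max K 0 * v t + max K 0 * v t :=
      add_le_add (posPartRightDeriv_le hKv0 fun h => by linarith [hlo i t ht (by linarith)])
        (posPartRightDeriv_le hKv0 fun h => by linarith [hhi i t ht (by linarith)])
    calc v' t ≤ ∑ _i : ι, (max K 0 * v t + max K 0 * v t) :=
          Finset.sum_le_sum fun i _ => hterm i
      _ = 2 * Fintype.card ι * max K 0 * v t + 0 := by
          simp only [Finset.sum_const, Finset.card_univ, nsmul_eq_mul]
          ring
  have hv_nonpos (t : ℝ) (ht : t ∈ Icc a b) : v t ≤ 0 := by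
    simpa [gronwallBound_ε0_δ0] using le_gronwallBound_of_liminf_deriv_right_le hv_cont
      (fun t ht _ hr => (hv_deriv t ht).liminf_right_slope_le hr)
      (Finset.sum_nonpos fun i _ => gapIcc_nonpos_iff.2 (ha i)) hv_bound t ht
  intro t ht i
  exact gapIcc_nonpos_iff.1 <| (Finset.single_le_sum (f := fun j => gapIcc lo hi (z j t))
    (fun j _ => gapIcc_nonneg) (Finset.mem_univ i)).trans (hv_nonpos t ht)

/-- The right-hand side of `Y'`, with `k = p - 1`. -/
noncomputable def expanderFieldY (k lam η x y : ℝ) : ℝ :=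
  (1 + y ^ 2) * (k * (lam ^ 2 - x * y) / x - exp (2 * η) / 2 * (y - x))

section expanderFieldY

variable {k lam c C η x y : ℝ}

lemma neg_expanderFieldY_le_of_le (hk : 0 ≤ k) (hc : 0 < c) (hC : C = lam ^ 2 / c)
    (hx : c / 2 ≤ x) (hy : y ≤ c) :
    -expanderFieldY k lam η x y
      ≤ (1 + y ^ 2) * (2 * k * (1 + C / c) + exp (2 * η)) * gapIcc c C x := by
  have hx0 : 0 < x := by linarith
  have hlam : lam ^ 2 = c * C := by rw [hC]; field_simp
  have hCc : 0 ≤ C / c := by rw [hC]; positivity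
  have hg : 0 ≤ gapIcc c C x := gapIcc_nonneg
  have hxC : x - C ≤ gapIcc c C x := sub_le_gapIcc_right
  have hcx : c - x ≤ gapIcc c C x := sub_le_gapIcc_left
  have hgap : x * y - lam ^ 2 ≤ c * gapIcc c C x := by
    nlinarith [mul_le_mul_of_nonneg_left hy hx0.le, mul_le_mul_of_nonneg_left hxC hc.le]
  have hdrift : k * (x * y - lam ^ 2) / x ≤ 2 * k * gapIcc c C x :=
    calc k * (x * y - lam ^ 2) / x ≤ k * (c * gapIcc c C x) / (c / 2) := by
          gcongr
      _ = 2 * k * gapIcc c C x := by field_simp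
  have hexp : exp (2 * η) / 2 * (y - x) ≤ exp (2 * η) * gapIcc c C x := by
    nlinarith [exp_pos (2 * η)]
  calc -expanderFieldY k lam η x y
      = (1 + y ^ 2) * (k * (x * y - lam ^ 2) / x + exp (2 * η) / 2 * (y - x)) := by
        unfold expanderFieldY; ring
    _ ≤ (1 + y ^ 2) * ((2 * k * (1 + C / c) + exp (2 * η)) * gapIcc c C x) := by
        gcongr
        nlinarith [mul_nonneg (mul_nonneg hk hCc) hg]
    _ = _ := by ring

lemma expanderFieldY_le_of_le (hk : 0 ≤ k) (hc : 0 < c) (hC : C = lam ^ 2 / c)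
    (hx : c / 2 ≤ x) (hy : C ≤ y) :
    expanderFieldY k lam η x y
      ≤ (1 + y ^ 2) * (2 * k * (1 + C / c) + exp (2 * η)) * gapIcc c C x := by
  have hx0 : 0 < x := by linarith
  have hC0 : 0 ≤ C := by rw [hC]; positivity
  have hlam : lam ^ 2 = c * C := by rw [hC]; field_simp
  have hg : 0 ≤ gapIcc c C x := gapIcc_nonneg
  have hxC : x - C ≤ gapIcc c C x := sub_le_gapIcc_right
  have hcx : c - x ≤ gapIcc c C x := sub_le_gapIcc_left
  have hgap : lam ^ 2 - x * y ≤ C * gapIcc c C x := by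
    nlinarith [mul_le_mul_of_nonneg_left hy hx0.le, mul_le_mul_of_nonneg_left hcx hC0]
  have hdrift : k * (lam ^ 2 - x * y) / x ≤ 2 * k * (C / c) * gapIcc c C x :=
    calc k * (lam ^ 2 - x * y) / x ≤ k * (C * gapIcc c C x) / (c / 2) := by
          gcongr
      _ = 2 * k * (C / c) * gapIcc c C x := by field_simp
  have hexp : -(exp (2 * η) / 2 * (y - x)) ≤ exp (2 * η) * gapIcc c C x := by
    nlinarith [exp_pos (2 * η)]
  calc expanderFieldY k lam η x y
      = (1 + y ^ 2) * (k * (lam ^ 2 - x * y) / x + -(exp (2 * η) / 2 * (y - x))) := by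
        unfold expanderFieldY; ring
    _ ≤ (1 + y ^ 2) * ((2 * k * (1 + C / c) + exp (2 * η)) * gapIcc c C x) := by
        gcongr
        nlinarith [mul_nonneg hk hg]
    _ = _ := by ring

end expanderFieldY

theorem expander_square_invariant_of_bounds {k lam c C a b R : ℝ} {X Y : ℝ → ℝ}
    (hk : 0 ≤ k) (hc : 0 < c) (hC : C = lam ^ 2 / c)
    (hX : ∀ η ∈ Icc a b, HasDerivWithinAt X (Y η - X η) (Icc a b) η)
    (hY : ∀ η ∈ Icc a b,
      HasDerivWithinAt Y (expanderFieldY k lam η (X η) (Y η)) (Icc a b) η)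
    (hX_ge : ∀ η ∈ Icc a b, c / 2 ≤ X η) (hY_le : ∀ η ∈ Icc a b, |Y η| ≤ R)
    (hinit : X a ∈ Icc c C ∧ Y a ∈ Icc c C) :
    ∀ η ∈ Icc a b, X η ∈ Icc c C ∧ Y η ∈ Icc c C := by
  -- `1` serves the sides `X = c, C`, the second term the sides `Y = c, C`.
  set K := max 1 ((1 + R ^ 2) * (2 * k * (1 + C / c) + exp (2 * b)))
  have hrate (η : ℝ) (hη : η ∈ Icc a b) :
      (1 + Y η ^ 2) * (2 * k * (1 + C / c) + exp (2 * η)) ≤ K := by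
    have hCc : 0 ≤ C / c := by rw [hC]; positivity
    refine le_max_of_le_right (mul_le_mul ?_ ?_ (by positivity) (by positivity))
    · have := sq_le_sq' (abs_le.1 (hY_le η hη)).1 (abs_le.1 (hY_le η hη)).2
      linarith
    · gcongr
      exact hη.2
  have hK : 1 ≤ K := le_max_left _ _
  have hX_gap (η : ℝ) (hη : η ∈ Icc a b) :
      (1 + Y η ^ 2) * (2 * k * (1 + C / c) + exp (2 * η)) * gapIcc c C (X η)
        ≤ K * (gapIcc c C (X η) + gapIcc c C (Y η)) :=
    (mul_le_mul_of_nonneg_right (hrate η hη) gapIcc_nonneg).trans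
      (mul_le_mul_of_nonneg_left (le_add_of_nonneg_right gapIcc_nonneg) (by linarith))
  have hY_gap (η : ℝ) : gapIcc c C (Y η) ≤ K * (gapIcc c C (X η) + gapIcc c C (Y η)) := by
    nlinarith [gapIcc_nonneg (lo := c) (hi := C) (x := X η),
      gapIcc_nonneg (lo := c) (hi := C) (x := Y η)]
  have hbox := mem_Icc_of_hasDerivWithinAt_of_inward (z := ![X, Y])
    (z' := ![fun η => Y η - X η, fun η => expanderFieldY k lam η (X η) (Y η)]) (K := K)
    (Fin.forall_fin_two.2 ⟨hX, hY⟩) ?_ ?_ (Fin.forall_fin_two.2 hinit)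
  · exact fun η hη => ⟨hbox η hη 0, hbox η hη 1⟩
  all_goals simp only [Fin.forall_fin_two, Fin.sum_univ_two, Matrix.cons_val_zero,
    Matrix.cons_val_one]
  · refine ⟨fun η _ hXη => ?_, fun η hη hYη => ?_⟩
    · linarith [sub_le_gapIcc_left (lo := c) (hi := C) (x := Y η), hY_gap η]
    · have hη' := Ico_subset_Icc_self hη
      linarith [neg_expanderFieldY_le_of_le (η := η) hk hc hC (hX_ge η hη') hYη, hX_gap η hη']
  · refine ⟨fun η _ hXη => ?_, fun η hη hYη => ?_⟩
    · linarith [sub_le_gapIcc_right (lo := c) (hi := C) (x := Y η), hY_gap η]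
    · have hη' := Ico_subset_Icc_self hη
      linarith [expanderFieldY_le_of_le (η := η) hk hc hC (hX_ge η hη') hYη, hX_gap η hη']

theorem expander_square_invariant_general (p : ℕ) (hp : 2 ≤ p)
    (lam : ℝ)
    (c C : ℝ) (hc : 0 < c) (hC : C = lam ^ 2 / c)
    (η₀ η₁ : ℝ)
    (X Y : ℝ → ℝ)
    (hX : ∀ η ∈ Set.Icc η₀ η₁, HasDerivWithinAt X (Y η - X η) (Set.Icc η₀ η₁) η)
    (hY : ∀ η ∈ Set.Icc η₀ η₁, HasDerivWithinAt Y
      ((1 + (Y η) ^ 2) *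
        (((p : ℝ) - 1) * (lam ^ 2 - X η * Y η) / X η
          - (Real.exp (2 * η) / 2) * (Y η - X η))) (Set.Icc η₀ η₁) η)
    (hinit : X η₀ ∈ Set.Icc c C ∧ Y η₀ ∈ Set.Icc c C) :
    ∀ η ∈ Set.Icc η₀ η₁, X η ∈ Set.Icc c C ∧ Y η ∈ Set.Icc c C := by
  have hk : (0 : ℝ) ≤ (p : ℝ) - 1 := by
    have : (2 : ℝ) ≤ p := by exact_mod_cast hp
    linarith
  have hXc : ContinuousOn X (Icc η₀ η₁) := fun η hη => (hX η hη).continuousWithinAt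
  have hYc : ContinuousOn Y (Icc η₀ η₁) := fun η hη => (hY η hη).continuousWithinAt
  set S := (fun η => (X η, Y η)) ⁻¹' (Icc c C ×ˢ Icc c C)
  have hS : IsClosed (S ∩ Icc η₀ η₁) := by
    rw [inter_comm]
    exact (hXc.prodMk hYc).preimage_isClosed_of_isClosed isClosed_Icc
      (isClosed_Icc.prod isClosed_Icc)
  refine fun η hη => IsClosed.Icc_subset_of_forall_mem_nhdsWithin hS hinit ?_ hη
  rintro t ⟨htS, ht⟩
  have hle : 𝓝[≥] t ≤ 𝓝[Icc η₀ η₁] t := nhdsWithin_le_of_mem (Icc_mem_nhdsGE_of_mem ht)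
  have ⟨⟨hcX, _⟩, hcY, hYC⟩ := htS
  have hnear : ∀ᶠ s in 𝓝[≥] t, s ∈ Icc η₀ η₁ ∧ c / 2 ≤ X s ∧ |Y s| ≤ C + 1 := by
    filter_upwards [Icc_mem_nhdsGE_of_mem ht,
      hle (hXc t (Ico_subset_Icc_self ht) (Ici_mem_nhds (show c / 2 < X t by linarith))),
      hle (hYc t (Ico_subset_Icc_self ht)
        (Icc_mem_nhds (show -(C + 1) < Y t by linarith) (show Y t < C + 1 by linarith)))]
      with s hs hXs hYs
    exact ⟨hs, hXs, abs_le.2 hYs⟩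
  obtain ⟨u, htu, hsub⟩ := mem_nhdsGE_iff_exists_Icc_subset.1 hnear
  have hIcc : Icc t u ⊆ Icc η₀ η₁ :=
    Icc_subset_Icc (hsub ⟨le_rfl, htu.le⟩).1.1 (hsub ⟨htu.le, le_rfl⟩).1.2
  have hsq := expander_square_invariant_of_bounds hk hc hC
    (fun s hs => (hX s (hIcc hs)).mono hIcc) (fun s hs => (hY s (hIcc hs)).mono hIcc)
    (fun s hs => (hsub hs).2.1) (fun s hs => (hsub hs).2.2) htS
  exact mem_of_superset (Ioc_mem_nhdsGT htu) fun s hs => hsq s (Ioc_subset_Icc_self hs)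

/-- Forward invariance of squares with corners on `X = Y` and `XY = λ_s²` for the
planar system obtained from the rotationally symmetric self-expander ODE:
a solution starting in `[c, C]²` (with `0 < c ≤ λ_s`, `C = λ_s²/c`) stays there. -/
theorem expander_square_invariant (p q : ℕ) (hp : 2 ≤ p) (hq : 2 ≤ q)
    (lam : ℝ) (hlam : lam = Real.sqrt (((q : ℝ) - 1) / ((p : ℝ) - 1)))
    (c C : ℝ) (hc : 0 < c) (hclam : c ≤ lam) (hC : C = lam ^ 2 / c)
    (η₀ η₁ : ℝ) (hη : η₀ ≤ η₁)
    (X Y : ℝ → ℝ)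
    (hX : ∀ η ∈ Set.Icc η₀ η₁, HasDerivWithinAt X (Y η - X η) (Set.Icc η₀ η₁) η)
    (hY : ∀ η ∈ Set.Icc η₀ η₁, HasDerivWithinAt Y
      ((1 + (Y η) ^ 2) *
        (((p : ℝ) - 1) * (lam ^ 2 - X η * Y η) / X η
          - (Real.exp (2 * η) / 2) * (Y η - X η))) (Set.Icc η₀ η₁) η)
    (hinit : X η₀ ∈ Set.Icc c C ∧ Y η₀ ∈ Set.Icc c C) :
    ∀ η ∈ Set.Icc η₀ η₁, X η ∈ Set.Icc c C ∧ Y η ∈ Set.Icc c C :=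
  expander_square_invariant_general p hp lam c C hc hC η₀ η₁ X Y hX hY hinit
end

section
/- Let p, q ≥ 2 be integers, n = p + q, and λ_s = √((q−1)/(p−1)). Consider the vector field F : {(X, Y) ∈ ℝ² : X > 0} → ℝ² given by F(X, Y) = (Y − X, (p−1)(1 + Y²)(λ_s² − XY)/X). Then F(λ_s, λ_s) = (0, 0), the Fréchet derivative of F at (λ_s, λ_s) is the linear map with matrix [[−1, 1], [−(n−2), −(n−2)]], its characteristic polynomial is λ² + (n−1)λ + 2(n−2) with discriminant (n−5)² − 8, and if 4 ≤ n ≤ 7 its eigenvalues are non-real with real part −(n−1)/2 < 0. -/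
/-!
Writing the second component of the field as `(c (1 + Y²) / X) · (λ_s² − X Y)`, the second factor
vanishes at `(λ_s, λ_s)`, so only its derivative `−(λ_s dX + λ_s dY)` survives and both partials
equal `−(p − 1)(1 + λ_s²) = −(n − 2)`. The eigenvalues are the roots of the monic quadratic
`z² + (n − 1) z + 2 (n − 2)`; for `4 ≤ n ≤ 7` its discriminant `(n − 5)² − 8` is negative, and a real
monic quadratic with negative discriminant has a conjugate pair of non-real roots with real part
`−(n − 1)/2`.
-/

open Real Polynomial

theorem mul_one_add_sq_sqrt_div {a b : ℝ} (ha : 0 < a) (hb : 0 ≤ b) :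
    a * (1 + √(b / a) ^ 2) = a + b := by
  rw [sq_sqrt (div_nonneg hb ha.le)]
  field_simp

theorem Matrix.charpoly_neg_one_one_neg_neg {R : Type*} [CommRing R] [Nontrivial R] (m : R) :
    (!![-1, 1; -m, -m] : Matrix (Fin 2) (Fin 2) R).charpoly =
      X ^ 2 + C (m + 1) * X + C (2 * m) := by
  rw [Matrix.charpoly_fin_two, Matrix.trace_fin_two_of, Matrix.det_fin_two_of]
  simp only [map_add, map_sub, map_neg, map_mul, map_one, map_ofNat]
  ring

theorem Complex.im_ne_zero_and_re_eq_of_quadratic_eq_zero {a b : ℝ} (hd : discrim 1 a b < 0)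
    {z : ℂ} (hz : z ^ 2 + a * z + b = 0) : z.im ≠ 0 ∧ z.re = -(a / 2) := by
  have hre := congrArg Complex.re hz
  have him := congrArg Complex.im hz
  simp only [sq, add_re, mul_re, ofReal_re, ofReal_im, zero_re, add_im, mul_im, zero_im] at hre him
  rw [discrim] at hd
  have him_ne : z.im ≠ 0 := by
    intro h0
    rw [h0] at hre
    nlinarith [sq_nonneg (2 * z.re + a)]
  have hre_eq : z.im * (2 * z.re + a) = 0 := by linarith
  exact ⟨him_ne, by linarith [(mul_eq_zero.mp hre_eq).resolve_left him_ne]⟩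

noncomputable def conePhaseField (c k : ℝ) (v : ℝ × ℝ) : ℝ × ℝ :=
  (v.2 - v.1, c * (1 + v.2 ^ 2) * (k - v.1 * v.2) / v.1)

open ContinuousLinearMap in
theorem hasFDerivAt_conePhaseField (c : ℝ) {l : ℝ} (hl : l ≠ 0) :
    HasFDerivAt (conePhaseField c (l ^ 2))
      ((snd ℝ ℝ ℝ - fst ℝ ℝ ℝ).prod ((-(c * (1 + l ^ 2))) • (fst ℝ ℝ ℝ + snd ℝ ℝ ℝ))) (l, l) := by
  have hfactor : HasFDerivAt (fun v : ℝ × ℝ => l ^ 2 - v.1 * v.2)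
      (-(l • snd ℝ ℝ ℝ + l • fst ℝ ℝ ℝ)) (l, l) :=
    ((hasFDerivAt_fst (𝕜 := ℝ) (p := (l, l))).fun_mul hasFDerivAt_snd).const_sub _
  have hcoeff : DifferentiableAt ℝ (fun v : ℝ × ℝ => c * (1 + v.2 ^ 2) / v.1) (l, l) := by
    fun_prop (disch := exact hl)
  have hsecond : HasFDerivAt (fun v : ℝ × ℝ => c * (1 + v.2 ^ 2) * (l ^ 2 - v.1 * v.2) / v.1)
      ((-(c * (1 + l ^ 2))) • (fst ℝ ℝ ℝ + snd ℝ ℝ ℝ)) (l, l) := by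
    have hprod := hcoeff.hasFDerivAt.fun_mul hfactor
    rw [show (fun v : ℝ × ℝ => c * (1 + v.2 ^ 2) * (l ^ 2 - v.1 * v.2) / v.1) =
        fun v => c * (1 + v.2 ^ 2) / v.1 * (l ^ 2 - v.1 * v.2) by funext v; ring]
    refine hprod.congr_fderiv (ContinuousLinearMap.ext fun v => ?_)
    simp only [add_apply, smul_apply, neg_apply, coe_fst', coe_snd', smul_eq_mul]
    field_simp
    ring
  exact (hasFDerivAt_snd.sub hasFDerivAt_fst).prodMk hsecond

/-- Linearization of the minimal-surface phase-plane vector field at the cone fixed point: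
`F(λ_s, λ_s) = 0`, the Fréchet derivative there is the linear map with matrix
`[[−1, 1], [−(n−2), −(n−2)]]`, whose characteristic polynomial is
`λ² + (n−1)λ + 2(n−2)` with discriminant `(n−5)² − 8`; when `4 ≤ n ≤ 7` the
eigenvalues are non-real with real part `−(n−1)/2 < 0`. -/
theorem cone_fixed_point_linearization (p q n : ℕ) (hp : 2 ≤ p) (hq : 2 ≤ q)
    (hn : n = p + q)
    (lam : ℝ) (hlam : lam = Real.sqrt (((q : ℝ) - 1) / ((p : ℝ) - 1)))
    (F : ℝ × ℝ → ℝ × ℝ)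
    (hF : ∀ X Y : ℝ, F (X, Y) =
      (Y - X, ((p : ℝ) - 1) * (1 + Y ^ 2) * (lam ^ 2 - X * Y) / X))
    (M : Matrix (Fin 2) (Fin 2) ℝ)
    (hM : M = !![(-1 : ℝ), 1; -((n : ℝ) - 2), -((n : ℝ) - 2)]) :
    F (lam, lam) = (0, 0) ∧
    HasFDerivAt F
      (((ContinuousLinearMap.snd ℝ ℝ ℝ) - (ContinuousLinearMap.fst ℝ ℝ ℝ)).prod
        ((-((n : ℝ) - 2)) • ((ContinuousLinearMap.fst ℝ ℝ ℝ) + (ContinuousLinearMap.snd ℝ ℝ ℝ))))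
      (lam, lam) ∧
    M.charpoly = X ^ 2 + C ((n : ℝ) - 1) * X + C (2 * ((n : ℝ) - 2)) ∧
    discrim 1 ((n : ℝ) - 1) (2 * ((n : ℝ) - 2)) = ((n : ℝ) - 5) ^ 2 - 8 ∧
    (4 ≤ n → n ≤ 7 →
      (-(((n : ℝ) - 1) / 2) < 0 ∧
        ∀ z : ℂ, z ^ 2 + ((n : ℂ) - 1) * z + 2 * ((n : ℂ) - 2) = 0 →
          z.im ≠ 0 ∧ z.re = -(((n : ℝ) - 1) / 2))) := by
  have hp1 : (0 : ℝ) < p - 1 := by linarith [(Nat.ofNat_le_cast.mpr hp : (2 : ℝ) ≤ p)]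
  have hq1 : (0 : ℝ) < q - 1 := by linarith [(Nat.ofNat_le_cast.mpr hq : (2 : ℝ) ≤ q)]
  have hnr : (n : ℝ) = p + q := by exact_mod_cast hn
  have hlam_ne : lam ≠ 0 := by rw [hlam]; exact (sqrt_pos.mpr (div_pos hq1 hp1)).ne'
  have hslope : ((p : ℝ) - 1) * (1 + lam ^ 2) = n - 2 := by
    rw [hlam, mul_one_add_sq_sqrt_div hp1 hq1.le, hnr]; ring
  have hF_eq : F = conePhaseField (p - 1) (lam ^ 2) := funext fun v => hF v.1 v.2
  have hdiscrim : discrim 1 ((n : ℝ) - 1) (2 * ((n : ℝ) - 2)) = ((n : ℝ) - 5) ^ 2 - 8 := by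
    rw [discrim]; ring
  refine ⟨by simp [hF, sq], ?_, ?_, hdiscrim, fun h4 h7 => ?_⟩
  · simpa only [hF_eq, hslope] using hasFDerivAt_conePhaseField ((p : ℝ) - 1) hlam_ne
  · rw [hM, Matrix.charpoly_neg_one_one_neg_neg, show (n : ℝ) - 2 + 1 = n - 1 by ring]
  · have h4r : (4 : ℝ) ≤ n := by exact_mod_cast h4
    have h7r : (n : ℝ) ≤ 7 := by exact_mod_cast h7
    refine ⟨by linarith, fun z hz =>
      Complex.im_ne_zero_and_re_eq_of_quadratic_eq_zero (b := 2 * ((n : ℝ) - 2)) ?_ ?_⟩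
    · rw [hdiscrim]; nlinarith
    · push_cast; linear_combination hz
end
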